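/- Let E and F be vector lattices with E Archimedean, and let T : E → F be a surjective, order continuous lattice homomorphism. If φ is an order bounded linear functional on F such that φ ∘ T is order continuous on E, then φ is order continuous on F. -/

import Mathlib

/-!
Pull the downward directed set `A ↓ 0` in `F` back to `B = E⁺ ∩ T⁻¹(A)`. Since `T` is a
surjective lattice homomorphism, `T(B) = A` and `B` is again downward directed. If `w ≥ 0` is a
lower bound of `B`, then `T w` is a lower bound of `A`, so `T w = 0`; hence `B - w ⊆ B`, and
iterating gives `n • w ≤ x` for all `n` and any `x ∈ B`, so `w = 0` because `E` is Archimedean.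
Thus `B ↓ 0`, and order continuity of `φ ∘ T` on `B` is order continuity of `φ` on `A`.
-/

section Defs

variable {X Y : Type*} [Lattice X] [AddCommGroup X] [Module ℝ X]
  [Lattice Y] [AddCommGroup Y] [Module ℝ Y]

/-- `φ` is an order bounded linear functional: it is bounded on order intervals. -/
def OrdBddFunctional (φ : X →ₗ[ℝ] ℝ) : Prop :=
  ∀ u : X, 0 ≤ u → BddAbove (φ '' Set.Icc 0 u) ∧ BddBelow (φ '' Set.Icc 0 u)

/-- A linear functional is order continuous if `inf |φ[A]| = 0` whenever `A` is a
(nonempty) downward directed set with infimum `0`. -/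
def OrdContFunctional (φ : X →ₗ[ℝ] ℝ) : Prop :=
  ∀ A : Set X, A.Nonempty → DirectedOn (· ≥ ·) A → IsGLB A 0 →
    IsGLB ((fun u => |φ u|) '' A) 0

/-- An order continuous operator: it maps (nonempty, downward directed) sets
decreasing to `0` to sets with infimum `0`. -/
def OrdContOperator (T : X →ₗ[ℝ] Y) : Prop :=
  ∀ A : Set X, A.Nonempty → DirectedOn (· ≥ ·) A → IsGLB A 0 →
    IsGLB (T '' A) 0

end Defs

open Set

theorem monotone_of_map_sup {α β : Type*} [SemilatticeSup α] [SemilatticeSup β] {f : α → β}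
    (hf : ∀ x y, f (x ⊔ y) = f x ⊔ f y) : Monotone f := fun x y hxy => by
  rw [← sup_eq_right.2 hxy, hf]
  exact le_sup_left

theorem nsmul_mem_lowerBounds_of_sub_mem {E : Type*} [AddGroup E] [Preorder E]
    [AddRightMono E] {B : Set E} {w : E} (h0 : 0 ∈ lowerBounds B)
    (hsub : ∀ x ∈ B, x - w ∈ B) (n : ℕ) : n • w ∈ lowerBounds B := by
  induction n with
  | zero => simpa using h0
  | succ n ih =>
    intro x hx
    calc (n + 1) • w = n • w + w := succ_nsmul w n
      _ ≤ (x - w) + w := by gcongr; exact ih (hsub x hx)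
      _ = x := sub_add_cancel x w

section LatticeHom

variable {E F G : Type*} [Lattice E] [AddCommGroup E] [Lattice F] [AddCommGroup F]
  [FunLike G E F] [AddMonoidHomClass G E F] {f : G} {A : Set F}

theorem exists_nonneg_eq_of_map_sup (hf : ∀ x y, f (x ⊔ y) = f x ⊔ f y)
    (hsurj : Function.Surjective f) {a : F} (ha : 0 ≤ a) : ∃ x, 0 ≤ x ∧ f x = a := by
  obtain ⟨x, rfl⟩ := hsurj a
  exact ⟨x ⊔ 0, le_sup_right, by rw [hf, map_zero, sup_eq_left.2 ha]⟩

theorem image_Ici_inter_preimage (hf : ∀ x y, f (x ⊔ y) = f x ⊔ f y)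
    (hsurj : Function.Surjective f) (hA : A ⊆ Ici 0) : f '' (Ici 0 ∩ f ⁻¹' A) = A := by
  refine Subset.antisymm (fun _ ⟨_, hx, hfx⟩ => hfx ▸ hx.2) fun a ha => ?_
  obtain ⟨x, hx, rfl⟩ := exists_nonneg_eq_of_map_sup hf hsurj (hA ha)
  exact ⟨x, ⟨hx, ha⟩, rfl⟩

theorem isGLB_Ici_inter_preimage [AddLeftMono E] (hf : ∀ x y, f (x ⊔ y) = f x ⊔ f y)
    (hsurj : Function.Surjective f)
    (harch : ∀ u v : E, 0 ≤ u → 0 ≤ v → (∀ n : ℕ, n • u ≤ v) → u = 0)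
    (hAne : A.Nonempty) (hA : IsGLB A 0) : IsGLB (Ici 0 ∩ f ⁻¹' A) 0 := by
  refine ⟨fun x hx => hx.1, fun u hu => ?_⟩
  set w := u ⊔ 0
  have hw : w ∈ lowerBounds (Ici 0 ∩ f ⁻¹' A) := fun x hx => sup_le (hu hx) hx.1
  have hfw : f w = 0 := by
    refine le_antisymm (hA.2 fun a ha => ?_) ?_
    · obtain ⟨x, hx, rfl⟩ := exists_nonneg_eq_of_map_sup hf hsurj (hA.1 ha)
      exact monotone_of_map_sup hf (hw ⟨hx, ha⟩)
    · simpa using monotone_of_map_sup hf (le_sup_right : (0 : E) ≤ w)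
  have hsub : ∀ x ∈ Ici 0 ∩ f ⁻¹' A, x - w ∈ Ici 0 ∩ f ⁻¹' A := fun x hx =>
    ⟨sub_nonneg.2 (hw hx), by simpa [mem_preimage, map_sub, hfw] using hx.2⟩
  obtain ⟨x₀, hx₀⟩ := (image_Ici_inter_preimage hf hsurj hA.1 ▸ hAne).of_image
  have hw0 : w = 0 := harch w x₀ le_sup_right hx₀.1 fun n =>
    nsmul_mem_lowerBounds_of_sub_mem (fun x hx => hx.1) hsub n hx₀
  exact le_sup_left.trans hw0.le

variable [AddLeftMono E] [AddLeftMono F]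

theorem map_inf_of_map_sup (hf : ∀ x y, f (x ⊔ y) = f x ⊔ f y) (x y : E) :
    f (x ⊓ y) = f x ⊓ f y := by
  rw [← neg_neg (x ⊓ y), neg_inf, map_neg, hf, map_neg, map_neg, ← neg_inf, neg_neg]

theorem directedOn_Ici_inter_preimage (hf : ∀ x y, f (x ⊔ y) = f x ⊔ f y)
    (hsurj : Function.Surjective f) (hA : A ⊆ Ici 0) (hdir : DirectedOn (· ≥ ·) A) :
    DirectedOn (· ≥ ·) (Ici 0 ∩ f ⁻¹' A) := by
  rintro x ⟨hx, hxA⟩ y ⟨hy, hyA⟩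
  obtain ⟨c, hcA, hcx, hcy⟩ := hdir _ hxA _ hyA
  obtain ⟨z, hz, rfl⟩ := exists_nonneg_eq_of_map_sup hf hsurj (hA hcA)
  refine ⟨z ⊓ x ⊓ y, ⟨le_inf (le_inf hz hx) hy, ?_⟩, inf_le_left.trans inf_le_right, inf_le_right⟩
  rwa [mem_preimage, map_inf_of_map_sup hf, map_inf_of_map_sup hf, inf_eq_left.2 hcx,
    inf_eq_left.2 hcy]

end LatticeHom

theorem ordCont_of_comp_surjective_latticeHom_general
    {E F : Type*}
    [Lattice E] [AddCommGroup E] [CovariantClass E E (· + ·) (· ≤ ·)] [Module ℝ E]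
    [Lattice F] [AddCommGroup F] [CovariantClass F F (· + ·) (· ≤ ·)] [Module ℝ F]
    (harch : ∀ u v : E, 0 ≤ u → 0 ≤ v → (∀ n : ℕ, n • u ≤ v) → u = 0)
    (T : E →ₗ[ℝ] F)
    (hlat : ∀ x y : E, T (x ⊔ y) = T x ⊔ T y)
    (hsurj : Function.Surjective T)
    (φ : F →ₗ[ℝ] ℝ)
    (hcomp : OrdContFunctional (φ.comp T)) :
    OrdContFunctional φ := by
  intro A hAne hAdir hAglb
  have hA : A ⊆ Ici 0 := hAglb.1
  have himage := image_Ici_inter_preimage hlat hsurj hA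
  have hB := hcomp _ (himage ▸ hAne).of_image (directedOn_Ici_inter_preimage hlat hsurj hA hAdir)
    (isGLB_Ici_inter_preimage hlat hsurj harch hAne hAglb)
  rwa [← himage, image_image]

/-- Let `E` be Archimedean and `T : E → F` a surjective, order
continuous lattice homomorphism.  If `φ` is an order bounded functional on `F` with
`φ ∘ T` order continuous, then `φ` is order continuous. -/
theorem ordCont_of_comp_surjective_latticeHom
    {E F : Type*}
    [Lattice E] [AddCommGroup E] [CovariantClass E E (· + ·) (· ≤ ·)] [Module ℝ E]
    [Lattice F] [AddCommGroup F] [CovariantClass F F (· + ·) (· ≤ ·)] [Module ℝ F]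
    (harch : ∀ u v : E, 0 ≤ u → 0 ≤ v → (∀ n : ℕ, n • u ≤ v) → u = 0)
    (T : E →ₗ[ℝ] F)
    (hlat : ∀ x y : E, T (x ⊔ y) = T x ⊔ T y)
    (hsurj : Function.Surjective T)
    (hTcont : OrdContOperator T)
    (φ : F →ₗ[ℝ] ℝ) (hφ : OrdBddFunctional φ)
    (hcomp : OrdContFunctional (φ.comp T)) :
    OrdContFunctional φ :=
  ordCont_of_comp_surjective_latticeHom_general harch T hlat hsurj φ hcomp
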